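/- Let N ≥ 2 and let A = Σ_{j=1}^{⌊N/2⌋} a_{2j−1}E_{2j−1,2j} + Σ_{j=1}^{⌊(N−1)/2⌋} a_{2j}E_{2j+1,2j} ∈ Mat_N(ℝ) with a₁,…,a_{N−1} ∈ ℝ∖{0}. Let h be the monic Hermite polynomials and, for n ≥ 0, define the matrix polynomial Qₙ(x) = hₙ(x)·I + A·hₙ₊₁(x) − (n/2)·Aᵀ·hₙ₋₁(x) − hₙ(x)·A·x + (n/2)·hₙ₋₁(x)·AᵀA·x (for n = 0 the terms with factor n vanish). Then for all n ≥ 0 and all x: hₙ'(x)·((AᵀA/2)·x − (A+Aᵀ)/2) + hₙ(x)·I = Qₙ(x). That is, the sequence of matrix orthogonal polynomials Qₙ for the weight W(x) = (I+Ax)e^{−x²}(I+Ax)ᵀ is the image of the scalar Hermite polynomials under the first-order differential operator 𝒟₁ = ∂((AᵀA/2)x − (A+Aᵀ)/2) + I, exhibiting W as a Darboux transformation of the diagonal Hermite weight e^{−x²}·I. -/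

import Mathlib

/-!
Orthogonality against `e^{-x²}` and integration by parts (`(e^{-x²})' = -2x e^{-x²}`) force the
structure relations `hₙ' = n hₙ₋₁` and `x hₙ = hₙ₊₁ + (n/2) hₙ₋₁`: in each case the difference of
the two sides has degree below some `k` and is orthogonal to every polynomial of degree below `k`,
in particular to itself, so it vanishes. Substituting both relations into
`hₙ'((AᵀA/2)x − (A+Aᵀ)/2) + hₙ I` turns it into `Qₙ` by linear algebra in the matrix module.
-/

open Matrix Polynomial

noncomputable section

/-- The staircase nilpotent matrix `A = ∑ a_{2j-1} E_{2j-1,2j} + ∑ a_{2j} E_{2j+1,2j}`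
(1-based indices, here realized with 0-based `Fin N` indices). -/
def nilA (N : ℕ) (a : ℕ → ℝ) : Matrix (Fin N) (Fin N) ℝ :=
  Matrix.of fun i k =>
    if k.val % 2 = 1 ∧ i.val + 1 = k.val then a k.val
    else if k.val % 2 = 1 ∧ i.val = k.val + 1 then a i.val
    else 0

/-- At `n = 0` the junk value `h (0 - 1) = h 0` only occurs multiplied by `n = 0`. -/
def QHerN (N : ℕ) (a : ℕ → ℝ) (h : ℕ → Polynomial ℝ) (n : ℕ) (x : ℝ) :
    Matrix (Fin N) (Fin N) ℝ :=
  (h n).eval x • (1 : Matrix (Fin N) (Fin N) ℝ)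
  + (h (n + 1)).eval x • nilA N a
  - ((n : ℝ) / 2 * (h (n - 1)).eval x) • (nilA N a)ᵀ
  - (x * (h n).eval x) • nilA N a
  + ((n : ℝ) / 2 * (h (n - 1)).eval x * x) • ((nilA N a)ᵀ * nilA N a)

namespace Polynomial

section Degree

variable {R : Type*} [Ring R]

theorem degree_derivative_lt_of_degree_lt_succ {p : R[X]} {n : ℕ}
    (hp : p.degree < ↑(n + 1)) : (derivative p).degree < n := by
  rw [degree_lt_iff_coeff_zero] at hp ⊢
  intro m hm
  rw [coeff_derivative, hp (m + 1) (by omega), zero_mul]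

theorem degree_X_mul_lt_succ {p : R[X]} {n : ℕ}
    (hp : p.degree < n) : (X * p).degree < ↑(n + 1) := by
  rw [degree_lt_iff_coeff_zero] at hp ⊢
  rintro (_ | m) hm
  · omega
  · rw [coeff_X_mul, hp m (by omega)]

theorem degree_sub_lt_of_coeff_eq {p q : R[X]} {k : ℕ} (hp : p.natDegree ≤ k)
    (hq : q.natDegree ≤ k) (hpq : p.coeff k = q.coeff k) : (p - q).degree < k := by
  rw [degree_lt_iff_coeff_zero]
  intro m hm
  rcases hm.eq_or_lt with rfl | hlt
  · rw [coeff_sub, hpq, sub_self]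
  · rw [coeff_sub, coeff_eq_zero_of_natDegree_lt (hp.trans_lt hlt),
      coeff_eq_zero_of_natDegree_lt (hq.trans_lt hlt), sub_self]

end Degree

open MeasureTheory

theorem integrable_eval_mul_exp_neg_sq (p : ℝ[X]) :
    Integrable fun x : ℝ => p.eval x * Real.exp (-x ^ 2) := by
  induction p using Polynomial.induction_on' with
  | add p q hp hq =>
    simp only [eval_add, add_mul]
    exact hp.add hq
  | monomial n c =>
    have hpow : Integrable fun x : ℝ => x ^ (n : ℝ) * Real.exp (-1 * x ^ 2) :=
      integrable_rpow_mul_exp_neg_mul_sq one_pos (by linarith [n.cast_nonneg (α := ℝ)])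
    simpa only [eval_monomial, mul_assoc, Real.rpow_natCast, neg_one_mul] using hpow.const_mul c

def gaussianIntegral : ℝ[X] →ₗ[ℝ] ℝ where
  toFun p := ∫ x, p.eval x * Real.exp (-x ^ 2)
  map_add' p q := by
    simp only [eval_add, add_mul]
    exact integral_add (integrable_eval_mul_exp_neg_sq p) (integrable_eval_mul_exp_neg_sq q)
  map_smul' c p := by
    simp only [eval_smul, smul_eq_mul, mul_assoc, RingHom.id_apply]
    exact integral_const_mul c _

theorem gaussianIntegral_apply (p : ℝ[X]) :
    gaussianIntegral p = ∫ x, p.eval x * Real.exp (-x ^ 2) := rfl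

/-- Integration by parts against `e^{-x²}`, whose derivative is `-2x e^{-x²}`. -/
theorem gaussianIntegral_derivative (p : ℝ[X]) :
    gaussianIntegral (derivative p) = gaussianIntegral (2 * X * p) := by
  have hderiv : ∀ x : ℝ, HasDerivAt (fun y => p.eval y * Real.exp (-y ^ 2))
      ((derivative p - 2 * X * p).eval x * Real.exp (-x ^ 2)) x := by
    intro x
    have hexp : HasDerivAt (fun y : ℝ => Real.exp (-y ^ 2)) (Real.exp (-x ^ 2) * -(2 * x)) x := by
      simpa using ((hasDerivAt_pow 2 x).fun_neg).exp
    refine ((p.hasDerivAt x).fun_mul hexp).congr_deriv ?_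
    simp only [eval_sub, eval_mul, eval_ofNat, eval_X]
    ring
  have hzero := integral_eq_zero_of_hasDerivAt_of_integrable hderiv
    (integrable_eval_mul_exp_neg_sq _) (integrable_eval_mul_exp_neg_sq p)
  rw [← gaussianIntegral_apply, map_sub, sub_eq_zero] at hzero
  exact hzero

theorem gaussianIntegral_derivative_mul (p q : ℝ[X]) :
    gaussianIntegral (derivative p * q) = gaussianIntegral (p * (2 * X * q - derivative q)) := by
  have hparts := gaussianIntegral_derivative (p * q)
  rw [derivative_mul, map_add] at hparts
  rw [mul_sub, map_sub, show p * (2 * X * q) = 2 * X * (p * q) by ring, ← hparts]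
  ring

theorem eq_zero_of_gaussianIntegral_mul_self_eq_zero {p : ℝ[X]}
    (hp : gaussianIntegral (p * p) = 0) : p = 0 := by
  have hcont : Continuous fun x : ℝ => (p * p).eval x * Real.exp (-x ^ 2) := by fun_prop
  have hnonneg : 0 ≤ fun x : ℝ => (p * p).eval x * Real.exp (-x ^ 2) := fun x => by
    simp only [Pi.zero_apply, eval_mul]
    exact mul_nonneg (mul_self_nonneg (p.eval x)) (Real.exp_pos _).le
  rw [gaussianIntegral_apply, integral_eq_zero_iff_of_nonneg hnonneg
    (integrable_eval_mul_exp_neg_sq _)] at hp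
  have hzero := (hcont.ae_eq_iff_eq volume (continuous_const (y := (0 : ℝ)))).mp hp
  refine Polynomial.funext fun x => ?_
  have hx := congrFun hzero x
  simp only [eval_mul, mul_eq_zero, or_self, Real.exp_ne_zero, or_false] at hx
  simpa using hx

structure IsMonicHermite (h : ℕ → ℝ[X]) : Prop where
  monic : ∀ n, (h n).Monic
  natDegree_eq : ∀ n, (h n).natDegree = n
  orthogonal : ∀ n m, n ≠ m → gaussianIntegral (h n * h m) = 0

namespace IsMonicHermite

variable {h : ℕ → ℝ[X]}

theorem coeff_self (H : IsMonicHermite h) (n : ℕ) : (h n).coeff n = 1 := by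
  simpa only [H.natDegree_eq] using (H.monic n).coeff_natDegree

theorem gaussianIntegral_mul_eq_zero_of_degree_lt (H : IsMonicHermite h) {n : ℕ} {p : ℝ[X]}
    (hp : p.degree < n) : gaussianIntegral (h n * p) = 0 := by
  let S : Sequence ℝ := ⟨h, fun i => by rw [degree_eq_natDegree (H.monic i).ne_zero, H.natDegree_eq]⟩
  have hspan : degreeLT ℝ n ≤ LinearMap.ker (gaussianIntegral ∘ₗ LinearMap.mulLeft ℝ (h n)) := by
    rw [← S.span_degreeLT fun i _ => by simp [S, (H.monic i).leadingCoeff], Submodule.span_le]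
    rintro _ ⟨m, hm, rfl⟩
    exact H.orthogonal n m (Nat.ne_of_gt hm)
  exact hspan (mem_degreeLT.mpr hp)

theorem derivative_succ (H : IsMonicHermite h) (n : ℕ) :
    derivative (h (n + 1)) = C ((n : ℝ) + 1) * h n := by
  set d := derivative (h (n + 1)) - C ((n : ℝ) + 1) * h n with hd
  have hd_degree : d.degree < n := by
    refine degree_sub_lt_of_coeff_eq ((natDegree_derivative_le _).trans ?_)
      ((natDegree_C_mul_le _ _).trans (H.natDegree_eq n).le) ?_
    · rw [H.natDegree_eq, Nat.add_sub_cancel]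
    · rw [coeff_derivative, coeff_C_mul, H.coeff_self, H.coeff_self, one_mul, mul_one]
  have hd_orthogonal : ∀ p : ℝ[X], p.degree < n → gaussianIntegral (d * p) = 0 := by
    intro p hp
    have hp' : (2 * X * p - derivative p).degree < ↑(n + 1) := by
      refine (degree_sub_le _ _).trans_lt (max_lt ?_ ?_)
      · rw [mul_assoc, ← C_ofNat, ← smul_eq_C_mul]
        exact (degree_smul_le _ _).trans_lt (degree_X_mul_lt_succ hp)
      · exact degree_derivative_le.trans_lt (hp.trans (by exact_mod_cast n.lt_succ_self))
    rw [hd, sub_mul, map_sub, gaussianIntegral_derivative_mul, mul_assoc (C _), ← smul_eq_C_mul,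
      map_smul, H.gaussianIntegral_mul_eq_zero_of_degree_lt hp,
      H.gaussianIntegral_mul_eq_zero_of_degree_lt hp', smul_zero, sub_zero]
  exact sub_eq_zero.mp (eq_zero_of_gaussianIntegral_mul_self_eq_zero (hd_orthogonal d hd_degree))

theorem derivative_eq (H : IsMonicHermite h) (n : ℕ) :
    derivative (h n) = C (n : ℝ) * h (n - 1) := by
  cases n with
  | zero => simp [(H.monic 0).natDegree_eq_zero.mp (H.natDegree_eq 0)]
  | succ n => simpa using H.derivative_succ n

theorem X_mul_eq (H : IsMonicHermite h) (n : ℕ) :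
    X * h n = h (n + 1) + C ((n : ℝ) / 2) * h (n - 1) := by
  set r := X * h n - (h (n + 1) + C ((n : ℝ) / 2) * h (n - 1)) with hr
  have hr_degree : r.degree < ↑(n + 1) := by
    refine degree_sub_lt_of_coeff_eq (natDegree_mul_le.trans ?_)
      (natDegree_add_le_of_degree_le (H.natDegree_eq _).le
        ((natDegree_C_mul_le _ _).trans (by rw [H.natDegree_eq]; omega))) ?_
    · rw [natDegree_X, H.natDegree_eq, add_comm]
    · rw [coeff_X_mul, coeff_add, coeff_C_mul, H.coeff_self, H.coeff_self,
        coeff_eq_zero_of_natDegree_lt (by rw [H.natDegree_eq]; omega), mul_zero, add_zero]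
  have hr_orthogonal : ∀ p : ℝ[X], p.degree < ↑(n + 1) → gaussianIntegral (r * p) = 0 := by
    intro p hp
    have hparts := gaussianIntegral_derivative_mul (h n) p
    rw [H.derivative_eq, mul_assoc (C _), ← smul_eq_C_mul, map_smul, mul_sub, map_sub,
      H.gaussianIntegral_mul_eq_zero_of_degree_lt (degree_derivative_lt_of_degree_lt_succ hp),
      sub_zero, show h n * (2 * X * p) = (2 : ℝ) • (X * h n * p) by
        rw [smul_eq_C_mul, C_ofNat]; ring, map_smul, smul_eq_mul, smul_eq_mul] at hparts
    rw [hr, sub_mul, add_mul, map_sub, map_add, H.gaussianIntegral_mul_eq_zero_of_degree_lt hp,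
      mul_assoc (C _), ← smul_eq_C_mul, map_smul, smul_eq_mul]
    linarith
  exact sub_eq_zero.mp (eq_zero_of_gaussianIntegral_mul_self_eq_zero (hr_orthogonal r hr_degree))

end IsMonicHermite

end Polynomial

theorem hermite_darboux_general
    (N : ℕ)
    (a : ℕ → ℝ)
    (h : ℕ → Polynomial ℝ)
    (hmonic : ∀ n, (h n).Monic) (hdeg : ∀ n, (h n).natDegree = n)
    (horth : ∀ n m : ℕ, n ≠ m →
      ∫ x : ℝ, (h n).eval x * (h m).eval x * Real.exp (-x ^ 2) = 0) :
    ∀ (n : ℕ) (x : ℝ),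
      ((Polynomial.derivative (h n)).eval x) •
          ((x / 2) • ((nilA N a)ᵀ * nilA N a)
            - (1 / 2 : ℝ) • (nilA N a + (nilA N a)ᵀ))
      + (h n).eval x • (1 : Matrix (Fin N) (Fin N) ℝ)
      = QHerN N a h n x := by
  have H : IsMonicHermite h := ⟨hmonic, hdeg, fun n m hnm => by
    simpa only [gaussianIntegral_apply, eval_mul] using horth n m hnm⟩
  intro n x
  have hd : (derivative (h n)).eval x = n * (h (n - 1)).eval x := by
    simp [H.derivative_eq n]
  have hx : (h (n + 1)).eval x = x * (h n).eval x - n / 2 * (h (n - 1)).eval x := by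
    have := congrArg (eval x) (H.X_mul_eq n)
    simp only [eval_mul, eval_add, eval_C, eval_X] at this
    linarith
  rw [QHerN, hd, hx]
  module

/-- The sequence `Qₙ` is the image of the scalar Hermite polynomials under the
first-order differential operator `𝒟₁ = ∂ ((AᵀA/2)x − (A+Aᵀ)/2) + I`:
`hₙ'(x)((AᵀA/2)x − (A+Aᵀ)/2) + hₙ(x)I = Qₙ(x)`, exhibiting the weight
`W(x) = (I+Ax)e^{−x²}(I+Ax)ᵀ` as a Darboux transformation of the diagonal
Hermite weight `e^{−x²}I`. -/
theorem hermite_darboux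
    (N : ℕ) (hN : 2 ≤ N)
    (a : ℕ → ℝ) (ha : ∀ k, 1 ≤ k → k ≤ N - 1 → a k ≠ 0)
    (h : ℕ → Polynomial ℝ)
    (hmonic : ∀ n, (h n).Monic) (hdeg : ∀ n, (h n).natDegree = n)
    (horth : ∀ n m : ℕ, n ≠ m →
      ∫ x : ℝ, (h n).eval x * (h m).eval x * Real.exp (-x ^ 2) = 0) :
    ∀ (n : ℕ) (x : ℝ),
      ((Polynomial.derivative (h n)).eval x) •
          ((x / 2) • ((nilA N a)ᵀ * nilA N a)
            - (1 / 2 : ℝ) • (nilA N a + (nilA N a)ᵀ))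
      + (h n).eval x • (1 : Matrix (Fin N) (Fin N) ℝ)
      = QHerN N a h n x :=
  hermite_darboux_general N a h hmonic hdeg horth

end
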